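/- Let ψ be a non-negative tripartite pure state on systems A, B, C with d_A = 2. Suppose the probabilities P_↑ = (ρ_A)_{0,0} and P_↓ = (ρ_A)_{1,1} are both nonzero, that ρ_AC = ρ_A ⊗ ρ_C, and that ρ_A(j) = ρ_A for every measurement outcome j on B with P_j > 0. Then the pair (d_C, t) with t = (ρ_A)_{0,1}/√(P_↑·P_↓) is feasible. -/

import Mathlib

open scoped BigOperators Kronecker
open scoped Classical

noncomputable def rhoA {dA dB dC : ℕ} (ψ : Fin dA × Fin dB × Fin dC → ℂ) :
    Matrix (Fin dA) (Fin dA) ℂ :=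
  Matrix.of fun i i' => ∑ j : Fin dB, ∑ k : Fin dC,
    ψ (i, j, k) * (starRingEnd ℂ) (ψ (i', j, k))

noncomputable def rhoC {dA dB dC : ℕ} (ψ : Fin dA × Fin dB × Fin dC → ℂ) :
    Matrix (Fin dC) (Fin dC) ℂ :=
  Matrix.of fun k k' => ∑ i : Fin dA, ∑ j : Fin dB,
    ψ (i, j, k) * (starRingEnd ℂ) (ψ (i, j, k'))

noncomputable def rhoAC {dA dB dC : ℕ} (ψ : Fin dA × Fin dB × Fin dC → ℂ) :
    Matrix (Fin dA × Fin dC) (Fin dA × Fin dC) ℂ :=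
  Matrix.of fun p q => ∑ j : Fin dB, ψ (p.1, j, p.2) * (starRingEnd ℂ) (ψ (q.1, j, q.2))

noncomputable def probB {dA dB dC : ℕ} (ψ : Fin dA × Fin dB × Fin dC → ℂ) (j : Fin dB) : ℝ :=
  ∑ i : Fin dA, ∑ k : Fin dC, Complex.normSq (ψ (i, j, k))

noncomputable def rhoAPost {dA dB dC : ℕ} (ψ : Fin dA × Fin dB × Fin dC → ℂ) (j : Fin dB) :
    Matrix (Fin dA) (Fin dA) ℂ :=
  Matrix.of fun i i' => (probB ψ j : ℂ)⁻¹ *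
    ∑ k : Fin dC, ψ (i, j, k) * (starRingEnd ℂ) (ψ (i', j, k))

def Normalized {dA dB dC : ℕ} (ψ : Fin dA × Fin dB × Fin dC → ℂ) : Prop :=
  ∑ i : Fin dA, ∑ j : Fin dB, ∑ k : Fin dC, Complex.normSq (ψ (i, j, k)) = 1

def NonNeg {dA dB dC : ℕ} (ψ : Fin dA × Fin dB × Fin dC → ℂ) : Prop :=
  ∀ x, 0 ≤ (ψ x).re ∧ (ψ x).im = 0

/-- The pair `(d, t)` is feasible: there are entrywise non-negative unit vectors `v, w ∈ ℝ^d`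
with inner product `t` and `2·|v|₁·|w|₁ ≤ t·(|v|₁² + |w|₁²)`. -/
def Feasible (d : ℕ) (t : ℝ) : Prop :=
  ∃ v w : Fin d → ℝ,
    (∀ k, 0 ≤ v k) ∧ (∀ k, 0 ≤ w k) ∧
    (∑ k, v k ^ 2) = 1 ∧ (∑ k, w k ^ 2) = 1 ∧
    (∑ k, v k * w k) = t ∧
    2 * (∑ k, |v k|) * (∑ k, |w k|) ≤ t * ((∑ k, |v k|) ^ 2 + (∑ k, |w k|) ^ 2)

/-! Since the amplitudes are real and non-negative, the ℓ¹-norm of a row `ψ(i, j, ·)` is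
`X_i(j) = ∑ₖ ψ(i, j, k)`. The factorization `ρ_AC = ρ_A ⊗ ρ_C` makes the Gram matrix of the
vectors `X₀, X₁ ∈ ℝ^{d_B}` proportional to `ρ_A`, and the post-measurement condition makes the
Gram matrix of the rows `ψ(0, j, ·), ψ(1, j, ·)` equal to `P_j ρ_A`. Hence, with `Q = √(ρ₀₀ ρ₁₁)`
and `t = ρ₀₁ / Q`, the quantities `E_j = t (ρ₁₁ X₀(j)² + ρ₀₀ X₁(j)²) - 2 Q X₀(j) X₁(j)` sum to
zero over `j`, so some outcome `j` with `P_j > 0` has `E_j ≥ 0`, and the two normalized rows of that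
outcome witness feasibility. -/

open ComplexConjugate Finset

lemma sum_mul_sum_eq_of_factor {J K : Type*} [Fintype J] [Fintype K] {x y : J → K → ℝ} {a : ℝ}
    {c : K → K → ℝ} (h : ∀ k k', ∑ j, x j k * y j k' = a * c k k') :
    ∑ j, (∑ k, x j k) * (∑ k, y j k) = a * ∑ k, ∑ k', c k k' := by
  simp only [sum_mul_sum]
  simp only [mul_sum, ← h]
  rw [sum_comm]
  exact sum_congr rfl fun k _ => sum_comm

lemma sum_eq_zero_of_sum_mul_self_nonpos {K : Type*} [Fintype K] {x : K → ℝ}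
    (h : ∑ k, x k * x k ≤ 0) : ∑ k, x k = 0 :=
  sum_eq_zero fun k _ => mul_self_eq_zero.1 <|
    (sum_eq_zero_iff_of_nonneg fun k _ => mul_self_nonneg (x k)).1
      (h.antisymm (sum_nonneg fun k _ => mul_self_nonneg (x k))) k (mem_univ k)

lemma exists_pos_nonneg_of_sum_eq_zero {J : Type*} [Fintype J] {p E : J → ℝ}
    (hE : ∑ j, E j = 0) (hzero : ∀ j, ¬ 0 < p j → E j = 0) (hp : ∃ j, 0 < p j) :
    ∃ j, 0 < p j ∧ 0 ≤ E j := by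
  by_contra! hneg
  obtain ⟨j₀, hj₀⟩ := hp
  have hle : ∀ j ∈ univ, E j ≤ 0 := fun j _ => by
    by_cases hj : 0 < p j
    · exact (hneg j hj).le
    · exact (hzero j hj).le
  have := sum_lt_sum hle ⟨j₀, mem_univ _, hneg j₀ hj₀⟩
  simp [hE] at this

lemma feasible_of_scaled {d : ℕ} {x y : Fin d → ℝ} (hx : ∀ k, 0 ≤ x k) (hy : ∀ k, 0 ≤ y k)
    {a b t : ℝ} (ha : 0 < a) (hb : 0 < b) (hxx : ∑ k, x k ^ 2 = a ^ 2)
    (hyy : ∑ k, y k ^ 2 = b ^ 2) (hxy : ∑ k, x k * y k = t * (a * b))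
    (hl1 : 2 * (∑ k, x k) * (∑ k, y k) * (a * b) ≤
      t * ((∑ k, x k) ^ 2 * b ^ 2 + (∑ k, y k) ^ 2 * a ^ 2)) :
    Feasible d t := by
  refine ⟨fun k => x k / a, fun k => y k / b, fun k => div_nonneg (hx k) ha.le,
    fun k => div_nonneg (hy k) hb.le, ?_, ?_, ?_, ?_⟩
  · simp only [div_pow, ← sum_div, hxx]
    exact div_self (by positivity)
  · simp only [div_pow, ← sum_div, hyy]
    exact div_self (by positivity)
  · simp only [div_mul_div_comm, ← sum_div, hxy]
    field_simp
  · simp only [abs_of_nonneg (div_nonneg (hx _) ha.le), abs_of_nonneg (div_nonneg (hy _) hb.le),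
      ← sum_div, div_pow]
    rw [← sub_nonneg] at hl1 ⊢
    have hdiff : t * ((∑ k, x k) ^ 2 / a ^ 2 + (∑ k, y k) ^ 2 / b ^ 2) -
        2 * ((∑ k, x k) / a) * ((∑ k, y k) / b) =
        (t * ((∑ k, x k) ^ 2 * b ^ 2 + (∑ k, y k) ^ 2 * a ^ 2) -
          2 * (∑ k, x k) * (∑ k, y k) * (a * b)) / (a * b) ^ 2 := by
      field_simp
    rw [hdiff]
    positivity

theorem feasible_of_gram_proportional {J : Type*} [Fintype J] {d : ℕ}
    {f : Fin 2 → J → Fin d → ℝ} (hf : ∀ i j k, 0 ≤ f i j k) {p : J → ℝ} (hp : ∃ j, 0 < p j)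
    {A : Fin 2 → Fin 2 → ℝ} {S : ℝ} (h0 : 0 < A 0 0) (h1 : 0 < A 1 1)
    (hrow : ∀ j i i', ∑ k, f i j k * f i' j k = p j * A i i')
    (hl1 : ∀ i i', ∑ j, (∑ k, f i j k) * (∑ k, f i' j k) = A i i' * S) :
    Feasible d (A 0 1 / √(A 0 0 * A 1 1)) := by
  set Q := √(A 0 0 * A 1 1)
  have hQpos : 0 < Q := Real.sqrt_pos.2 (mul_pos h0 h1)
  have hQsq : Q ^ 2 = A 0 0 * A 1 1 := Real.sq_sqrt (mul_pos h0 h1).le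
  set t := A 0 1 / Q with ht
  set X : Fin 2 → J → ℝ := fun i j => ∑ k, f i j k
  set E : J → ℝ := fun j =>
    t * (A 1 1 * (X 0 j * X 0 j) + A 0 0 * (X 1 j * X 1 j)) - 2 * Q * (X 0 j * X 1 j)
  have hEsum : ∑ j, E j = 0 := by
    simp only [E, sum_sub_distrib, ← mul_sum, sum_add_distrib, X, hl1, ht]
    field_simp
    linear_combination -2 * A 0 1 * S * hQsq
  have hEzero : ∀ j, ¬ 0 < p j → E j = 0 := by
    intro j hpj
    have hAii : ∀ i, 0 ≤ A i i := Fin.forall_fin_two.2 ⟨h0.le, h1.le⟩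
    have hX : ∀ i, X i j = 0 := fun i => sum_eq_zero_of_sum_mul_self_nonpos <|
      (hrow j i i).trans_le (mul_nonpos_of_nonpos_of_nonneg (not_lt.1 hpj) (hAii i))
    simp [E, hX]
  obtain ⟨j, hpj, hEj⟩ := exists_pos_nonneg_of_sum_eq_zero hEsum hEzero hp
  have ha2 : (√(p j) * √(A 0 0)) ^ 2 = p j * A 0 0 := by
    rw [mul_pow, Real.sq_sqrt hpj.le, Real.sq_sqrt h0.le]
  have hb2 : (√(p j) * √(A 1 1)) ^ 2 = p j * A 1 1 := by
    rw [mul_pow, Real.sq_sqrt hpj.le, Real.sq_sqrt h1.le]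
  have hab : √(p j) * √(A 0 0) * (√(p j) * √(A 1 1)) = p j * Q := by
    rw [mul_mul_mul_comm, Real.mul_self_sqrt hpj.le, ← Real.sqrt_mul h0.le]
  refine feasible_of_scaled (a := √(p j) * √(A 0 0)) (b := √(p j) * √(A 1 1)) (hf 0 j) (hf 1 j)
    (by positivity) (by positivity) (by simp only [ha2, sq, hrow])
    (by simp only [hb2, sq, hrow]) (by rw [hab, hrow, ht]; field_simp) ?_
  rw [ha2, hb2, hab]
  linear_combination mul_nonneg hpj.le hEj

section ReducedStates

variable {dA dB dC : ℕ} {ψ : Fin dA × Fin dB × Fin dC → ℂ}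

lemma probB_nonneg (j : Fin dB) : 0 ≤ probB ψ j :=
  sum_nonneg fun _ _ => sum_nonneg fun _ _ => Complex.normSq_nonneg _

lemma eq_zero_of_probB_eq_zero {j : Fin dB} (hj : probB ψ j = 0) (i : Fin dA) (k : Fin dC) :
    ψ (i, j, k) = 0 := by
  have hi := (sum_eq_zero_iff_of_nonneg fun i _ =>
    sum_nonneg fun k _ => Complex.normSq_nonneg _).1 hj i (mem_univ i)
  exact Complex.normSq_eq_zero.1 <|
    (sum_eq_zero_iff_of_nonneg fun k _ => Complex.normSq_nonneg _).1 hi k (mem_univ k)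

lemma exists_probB_pos {i : Fin dA} (hi : rhoA ψ i i ≠ 0) : ∃ j, 0 < probB ψ j := by
  by_contra! h
  apply hi
  simp [rhoA, eq_zero_of_probB_eq_zero ((h _).antisymm (probB_nonneg _))]

lemma sum_mul_conj_eq_probB_mul_rhoA (hpost : ∀ j, 0 < probB ψ j → rhoAPost ψ j = rhoA ψ)
    (j : Fin dB) (i i' : Fin dA) :
    ∑ k, ψ (i, j, k) * conj (ψ (i', j, k)) = probB ψ j * rhoA ψ i i' := by
  rcases (probB_nonneg j).lt_or_eq with hj | hj
  · rw [← hpost j hj, rhoAPost, Matrix.of_apply, mul_inv_cancel_left₀]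
    exact_mod_cast hj.ne'
  · simp [eq_zero_of_probB_eq_zero hj.symm, ← hj]

lemma NonNeg.re_mul_conj (hψ : NonNeg ψ) (x y : Fin dA × Fin dB × Fin dC) :
    (ψ x * conj (ψ y)).re = (ψ x).re * (ψ y).re := by
  simp [(hψ y).2]

lemma NonNeg.im_rhoA (hψ : NonNeg ψ) (i i' : Fin dA) : (rhoA ψ i i').im = 0 := by
  simp [rhoA, Complex.im_sum, (hψ _).2]

lemma NonNeg.re_rhoA (hψ : NonNeg ψ) (i i' : Fin dA) :
    (rhoA ψ i i').re = ∑ j, ∑ k, (ψ (i, j, k)).re * (ψ (i', j, k)).re := by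
  simp [rhoA, Complex.re_sum, hψ.re_mul_conj]

end ReducedStates

theorem stmt4_general {dB dC : ℕ} (ψ : Fin 2 × Fin dB × Fin dC → ℂ)
    (hpos : NonNeg ψ)
    (hup : (rhoA ψ 0 0).re ≠ 0) (hdown : (rhoA ψ 1 1).re ≠ 0)
    (hfac : rhoAC ψ = rhoA ψ ⊗ₖ rhoC ψ)
    (hpost : ∀ j : Fin dB, 0 < probB ψ j → rhoAPost ψ j = rhoA ψ) :
    Feasible dC ((rhoA ψ 0 1).re / Real.sqrt ((rhoA ψ 0 0).re * (rhoA ψ 1 1).re)) := by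
  have hdiag : ∀ i, 0 ≤ (rhoA ψ i i).re := fun i => by
    rw [hpos.re_rhoA]
    exact sum_nonneg fun j _ => sum_nonneg fun k _ => mul_self_nonneg _
  refine feasible_of_gram_proportional (f := fun i j k => (ψ (i, j, k)).re) (p := probB ψ)
    (A := fun i i' => (rhoA ψ i i').re) (S := ∑ k, ∑ k', (rhoC ψ k k').re)
    (fun i j k => (hpos _).1) (exists_probB_pos (i := 0) fun h => hup (by rw [h]; rfl))
    ((hdiag 0).lt_of_ne' hup) ((hdiag 1).lt_of_ne' hdown) (fun j i i' => ?_) (fun i i' => ?_)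
  · have := congrArg Complex.re (sum_mul_conj_eq_probB_mul_rhoA hpost j i i')
    simpa [Complex.re_sum, hpos.re_mul_conj] using this
  · refine sum_mul_sum_eq_of_factor fun k k' => ?_
    have := congrArg Complex.re (congrFun (congrFun hfac (i, k)) (i', k'))
    simpa [rhoAC, Complex.re_sum, hpos.re_mul_conj, Complex.mul_re, hpos.im_rhoA] using this

theorem stmt4 {dB dC : ℕ} (ψ : Fin 2 × Fin dB × Fin dC → ℂ)
    (hnorm : Normalized ψ) (hpos : NonNeg ψ)
    (hup : (rhoA ψ 0 0).re ≠ 0) (hdown : (rhoA ψ 1 1).re ≠ 0)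
    (hfac : rhoAC ψ = rhoA ψ ⊗ₖ rhoC ψ)
    (hpost : ∀ j : Fin dB, 0 < probB ψ j → rhoAPost ψ j = rhoA ψ) :
    Feasible dC ((rhoA ψ 0 1).re / Real.sqrt ((rhoA ψ 0 0).re * (rhoA ψ 1 1).re)) :=
  stmt4_general ψ hpos hup hdown hfac hpost
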